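/- Let X, Y be random variables with values in the space of compact subsets of ℝ^m, conditionally independent and identically distributed given a σ-field H. If E[m(X ∩ Y)] = 0 (m = Lebesgue measure), then E[m(X)] = 0. -/

import Mathlib

open MeasureTheory

lemma fubini_section {Ω : Type*} {mΩ : MeasurableSpace Ω} (μ : Measure Ω)
    [IsFiniteMeasure μ] (d : ℕ) (Z : Ω → Set (Fin d → ℝ))
    (h : MeasurableSet {p : (Fin d → ℝ) × Ω | p.1 ∈ Z p.2}) :
    (∫⁻ ω, volume (Z ω) ∂μ) = ∫⁻ z, μ {ω | z ∈ Z ω} ∂volume := by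
  have h1 := Measure.prod_apply_symm (μ := (volume : Measure (Fin d → ℝ))) (ν := μ) h
  have h2 := Measure.prod_apply (μ := (volume : Measure (Fin d → ℝ))) (ν := μ) h
  exact h1.symm.trans h2

lemma ae_section_zero {Ω : Type*} {mΩ : MeasurableSpace Ω} (μ : Measure Ω)
    [IsFiniteMeasure μ] (d : ℕ) (Z : Ω → Set (Fin d → ℝ))
    (h : MeasurableSet {p : (Fin d → ℝ) × Ω | p.1 ∈ Z p.2})
    (hz : (∫⁻ ω, volume (Z ω) ∂μ) = 0) :
    ∀ᵐ z, μ {ω | z ∈ Z ω} = 0 := by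
  rw [fubini_section μ d Z h] at hz
  have hmeas : Measurable fun z : Fin d → ℝ => μ {ω | z ∈ Z ω} :=
    measurable_measure_prodMk_left (ν := μ) h
  have := (lintegral_eq_zero_iff hmeas).mp hz
  exact this

lemma lintegral_zero_of_ae_section_zero {Ω : Type*} {mΩ : MeasurableSpace Ω} (μ : Measure Ω)
    [IsFiniteMeasure μ] (d : ℕ) (Z : Ω → Set (Fin d → ℝ))
    (h : MeasurableSet {p : (Fin d → ℝ) × Ω | p.1 ∈ Z p.2})
    (hz : ∀ᵐ z, μ {ω | z ∈ Z ω} = 0) :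
    (∫⁻ ω, volume (Z ω) ∂μ) = 0 := by
  rw [fubini_section μ d Z h]
  rw [lintegral_congr_ae (g := fun _ => (0 : ENNReal)) (by filter_upwards [hz] with z hzz; simpa using hzz)]
  simp

lemma measure_zero_of_indicator_integral_zero {Ω : Type*} {mΩ : MeasurableSpace Ω}
    (μ : Measure Ω) [IsFiniteMeasure μ] {s : Set Ω} (hs : MeasurableSet s)
    (h : ∫ ω, s.indicator (fun _ => (1:ℝ)) ω ∂μ = 0) : μ s = 0 := by
  rw [integral_indicator hs] at h
  simp only [integral_const, smul_eq_mul, mul_one, Measure.real, Measure.restrict_apply_univ] at h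
  rcases (ENNReal.toReal_eq_zero_iff (μ s)).mp h with h' | h'
  · exact h'
  · exact absurd h' (measure_ne_top μ s)

lemma integrable_indicator_one {Ω : Type*} {mΩ : MeasurableSpace Ω}
    (μ : Measure Ω) [IsFiniteMeasure μ] {s : Set Ω} (hs : MeasurableSet s) :
    Integrable (s.indicator (fun _ => (1:ℝ))) μ :=
  (integrable_const (1:ℝ)).indicator hs

lemma prod_msp_mono {α β : Type*} {m1 m1' : MeasurableSpace α} {m2 m2' : MeasurableSpace β}
    (h1 : m1 ≤ m1') (h2 : m2 ≤ m2') :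
    (@Prod.instMeasurableSpace α β m1 m2) ≤ (@Prod.instMeasurableSpace α β m1' m2') :=
  sup_le_sup (MeasurableSpace.comap_mono h1) (MeasurableSpace.comap_mono h2)

/-- Conditional independence argument of Lemma 5.5: if `X`, `Y` are random compact
subsets of `ℝ^d` that are conditionally independent and identically distributed given a
sub-σ-field `H` (expressed via conditional expectations of the jointly measurable
indicator processes `(z,ω) ↦ 1_{z ∈ X(ω)}`), and `E[m(X ∩ Y)] = 0` for Lebesgue
measure `m`, then `E[m(X)] = 0`. -/
theorem stmt_17 {Ω : Type*} (H : MeasurableSpace Ω) [mΩ : MeasurableSpace Ω] (μ : Measure Ω)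
    [IsProbabilityMeasure μ]
    (d : ℕ) (hH : H ≤ mΩ)
    (X Y : Ω → Set (Fin d → ℝ))
    (hXcpt : ∀ ω, IsCompact (X ω)) (hYcpt : ∀ ω, IsCompact (Y ω))
    (hXjm : MeasurableSet {p : (Fin d → ℝ) × Ω | p.1 ∈ X p.2})
    (hYjm : MeasurableSet {p : (Fin d → ℝ) × Ω | p.1 ∈ Y p.2})
    (hcondindep : ∀ z : Fin d → ℝ,
      (μ[fun ω => (X ω).indicator (fun _ => (1:ℝ)) z * (Y ω).indicator (fun _ => (1:ℝ)) z|H])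
        =ᵐ[μ] fun ω =>
          (μ[fun ω' => (X ω').indicator (fun _ => (1:ℝ)) z|H]) ω *
            (μ[fun ω' => (Y ω').indicator (fun _ => (1:ℝ)) z|H]) ω)
    (hiddist : ∀ z : Fin d → ℝ,
      (μ[fun ω => (X ω).indicator (fun _ => (1:ℝ)) z|H])
        =ᵐ[μ] (μ[fun ω => (Y ω).indicator (fun _ => (1:ℝ)) z|H]))
    (hzero : (∫⁻ ω, volume (X ω ∩ Y ω) ∂μ) = 0) :
    (∫⁻ ω, volume (X ω) ∂μ) = 0 := by
  -- upgrade joint measurability from the H-product to the mΩ-product σ-algebra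
  have hmono := prod_msp_mono (α := Fin d → ℝ) (β := Ω)
    (le_refl (MeasurableSpace.pi)) hH
  have hXjm' : MeasurableSet[@Prod.instMeasurableSpace (Fin d → ℝ) Ω MeasurableSpace.pi mΩ]
      {p : (Fin d → ℝ) × Ω | p.1 ∈ X p.2} := hXjm
  have hYjm' : MeasurableSet[@Prod.instMeasurableSpace (Fin d → ℝ) Ω MeasurableSpace.pi mΩ]
      {p : (Fin d → ℝ) × Ω | p.1 ∈ Y p.2} := hYjm
  -- sections are measurable
  have hXsec : ∀ z : Fin d → ℝ, MeasurableSet[mΩ] {ω | z ∈ X ω} := fun z =>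
    @measurable_prodMk_left _ _ _ mΩ z _ hXjm'
  have hjmXY : MeasurableSet[@Prod.instMeasurableSpace (Fin d → ℝ) Ω MeasurableSpace.pi mΩ]
      {p : (Fin d → ℝ) × Ω | p.1 ∈ X p.2 ∩ Y p.2} := by
    have : {p : (Fin d → ℝ) × Ω | p.1 ∈ X p.2 ∩ Y p.2}
        = {p : (Fin d → ℝ) × Ω | p.1 ∈ X p.2} ∩ {p | p.1 ∈ Y p.2} := rfl
    rw [this]; exact hXjm'.inter hYjm'
  have hae : ∀ᵐ z, μ {ω | z ∈ X ω ∩ Y ω} = 0 := by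
    have := ae_section_zero μ d (fun ω => X ω ∩ Y ω) hjmXY hzero
    simpa using this
  -- for a.e. z, μ {ω | z ∈ X ω} = 0
  have hkey : ∀ᵐ z, μ {ω | z ∈ X ω} = 0 := by
    filter_upwards [hae] with z hz
    -- the product indicator function is a.e. zero
    have hpae : (fun ω => (X ω).indicator (fun _ => (1:ℝ)) z * (Y ω).indicator (fun _ => (1:ℝ)) z)
        =ᵐ[μ] (0 : Ω → ℝ) := by
      refine (measure_mono_null ?_ hz : μ _ = 0)
      intro ω hω
      simp only [Set.mem_setOf_eq, Set.mem_compl_iff] at *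
      by_contra hmem
      simp only [Set.mem_inter_iff, not_and_or] at hmem
      rcases hmem with h | h <;> simp [Set.indicator_of_notMem h] at hω
    set f : Ω → ℝ := μ[fun ω => (X ω).indicator (fun _ => (1:ℝ)) z|H] with hf
    have hce0 : (μ[fun ω => (X ω).indicator (fun _ => (1:ℝ)) z *
        (Y ω).indicator (fun _ => (1:ℝ)) z|H]) =ᵐ[μ] (0 : Ω → ℝ) := by
      refine (condExp_congr_ae hpae).trans ?_
      rw [condExp_zero]
    have hsq : (fun ω => f ω * f ω) =ᵐ[μ] (0 : Ω → ℝ) := by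
      have h1 := (hcondindep z).symm.trans hce0
      filter_upwards [h1, hiddist z] with ω h1 h2
      simpa [hf, ← h2] using h1
    have hfzero : f =ᵐ[μ] (0 : Ω → ℝ) := by
      filter_upwards [hsq] with ω hω
      have := mul_self_eq_zero.mp hω
      simpa using this
    -- the indicator is integrable
    have hind : (fun ω => (X ω).indicator (fun _ => (1:ℝ)) z)
        = Set.indicator {ω | z ∈ X ω} (fun _ => (1:ℝ)) := by
      ext ω
      by_cases h : z ∈ X ω <;> simp [Set.indicator, h]
    have hint : Integrable (fun ω => (X ω).indicator (fun _ => (1:ℝ)) z) μ := by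
      rw [hind]
      exact integrable_indicator_one μ (hXsec z)
    have hEzero : ∫ ω, (X ω).indicator (fun _ => (1:ℝ)) z ∂μ = 0 := by
      rw [← integral_condExp hH (f := fun ω => (X ω).indicator (fun _ => (1:ℝ)) z)]
      rw [integral_congr_ae hfzero]
      simp
    rw [hind] at hEzero
    exact measure_zero_of_indicator_integral_zero μ (hXsec z) hEzero
  exact lintegral_zero_of_ae_section_zero μ d X hXjm' hkey
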